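/- Let F be a h-Lagrangian submersion from a hyperkähler manifold (M, I, J, K, g_M) onto a Riemannian manifold (N, g_N) with h-Lagrangian basis (I, J, K). Then the following are equivalent: (a) the horizontal distribution defines a totally geodesic foliation on M (i.e., ∇_X Y is horizontal for all horizontal X, Y); (b) A_X(IY) = 0 for all horizontal X, Y; (c) A_X(KY) = 0 for all horizontal X, Y; (d) A_X(JY) = 0 for all horizontal X, Y. -/

import Mathlib

/- A synthetic (Koszul-algebraic) model of the geometry of a Riemannian submersion
`F : (M, g_M) → (N, g_N)`:
`Fn` plays the role of the ring of smooth functions on the total space `M`,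
`VF` the `Fn`-module of vector fields on `M`, `g` the Riemannian metric `g_M`,
`nabla` its Levi-Civita connection, `bracket` the Lie bracket, `deriv` the
action of vector fields on functions, and `vp` the orthogonal projection onto
the vertical distribution `ker F_*` (so `hp = id - vp` is the horizontal
projection onto `(ker F_*)^⊥`). -/

variable {Fn : Type} [CommRing Fn] [Algebra ℝ Fn]
variable {VF : Type} [AddCommGroup VF] [Module Fn VF] [Module ℝ VF] [IsScalarTower ℝ Fn VF]

/-- The horizontal projection `H = id - V`. -/
def hp (vp : VF →ₗ[Fn] VF) (X : VF) : VF := X - vp X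

/-- A vector field is vertical if it is fixed by the vertical projection. -/
def IsVertical (vp : VF →ₗ[Fn] VF) (X : VF) : Prop := vp X = X

/-- A vector field is horizontal if it is killed by the vertical projection. -/
def IsHorizontal (vp : VF →ₗ[Fn] VF) (X : VF) : Prop := vp X = 0

/-- The O'Neill tensor `T_U V = H∇_{VU}VV + V∇_{VU}HV`. -/
def Tten (nabla : VF → VF → VF) (vp : VF →ₗ[Fn] VF) (U V : VF) : VF :=
  hp vp (nabla (vp U) (vp V)) + vp (nabla (vp U) (hp vp V))

/-- The O'Neill tensor `A_U V = H∇_{HU}VV + V∇_{HU}HV`. -/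
def Aten (nabla : VF → VF → VF) (vp : VF →ₗ[Fn] VF) (U V : VF) : VF :=
  hp vp (nabla (hp vp U) (vp V)) + vp (nabla (hp vp U) (hp vp V))

/-- The horizontal distribution defines a totally geodesic foliation on `M`. -/
def HorTotallyGeodesic (nabla : VF → VF → VF) (vp : VF →ₗ[Fn] VF) : Prop :=
  ∀ X Y : VF, IsHorizontal vp X → IsHorizontal vp Y → vp (nabla X Y) = 0

/-! For horizontal `X, Y` and a parallel almost complex structure `L` that either swaps or
preserves the vertical and horizontal distributions, `A_X (L Y) = L (V ∇_X Y)`: in the swapping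
case `L Y` is vertical and `H (L Z) = L (V Z)`, in the preserving case `L Y` is horizontal and
`V (L Z) = L (V Z)`. Since `L² = -1`, `A_X (L Y)` vanishes exactly when `V ∇_X Y` does. -/

section

variable {R M : Type} [CommRing R] [AddCommGroup M] [Module R M] {vp : M →ₗ[R] M}

theorem vp_add_hp (X : M) : vp X + hp vp X = X :=
  add_sub_cancel _ _

theorem hp_eq_self_of_isHorizontal {X : M} (hX : IsHorizontal vp X) : hp vp X = X := by
  rw [hp, hX, sub_zero]

theorem isHorizontal_hp (hvp_idem : ∀ X, vp (vp X) = vp X) (X : M) :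
    IsHorizontal vp (hp vp X) := by
  rw [IsHorizontal, hp, map_sub, hvp_idem, sub_self]

theorem vp_map_eq_map_hp (hvp_idem : ∀ X, vp (vp X) = vp X) {L : M →ₗ[R] M}
    (hV : ∀ V, IsVertical vp V → IsHorizontal vp (L V))
    (hH : ∀ X, IsHorizontal vp X → IsVertical vp (L X)) (Z : M) :
    vp (L Z) = L (hp vp Z) := by
  conv_lhs => rw [← vp_add_hp (vp := vp) Z]
  rw [map_add, map_add, hV _ (hvp_idem Z), hH _ (isHorizontal_hp hvp_idem Z), zero_add]

theorem vp_map_eq_map_vp (hvp_idem : ∀ X, vp (vp X) = vp X) {L : M →ₗ[R] M}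
    (hV : ∀ V, IsVertical vp V → IsVertical vp (L V))
    (hH : ∀ X, IsHorizontal vp X → IsHorizontal vp (L X)) (Z : M) :
    vp (L Z) = L (vp Z) := by
  conv_lhs => rw [← vp_add_hp (vp := vp) Z]
  rw [map_add, map_add, hV _ (hvp_idem Z), hH _ (isHorizontal_hp hvp_idem Z), add_zero]

theorem hp_map_eq_map_vp {L : M →ₗ[R] M} (hL : ∀ Z, vp (L Z) = L (hp vp Z)) (Z : M) :
    hp vp (L Z) = L (vp Z) := by
  rw [hp, hL, hp, map_sub, sub_sub_cancel]

theorem hp_map_eq_map_hp {L : M →ₗ[R] M} (hL : ∀ Z, vp (L Z) = L (vp Z)) (Z : M) :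
    hp vp (L Z) = L (hp vp Z) := by
  rw [hp, hL, hp, map_sub]

variable {nabla : M → M → M} {L : M →ₗ[R] M} {X Y : M}

theorem Aten_map_of_vp_map_eq_map_hp (hn_zero : ∀ X, nabla X 0 = 0)
    (hpar : ∀ X Y, nabla X (L Y) = L (nabla X Y)) (hL : ∀ Z, vp (L Z) = L (hp vp Z))
    (hX : IsHorizontal vp X) (hY : IsHorizontal vp Y) :
    Aten nabla vp X (L Y) = L (vp (nabla X Y)) := by
  rw [Aten, hp_eq_self_of_isHorizontal hX, hL, hp_eq_self_of_isHorizontal hY,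
    hp_map_eq_map_vp hL, hY, map_zero, hn_zero, map_zero, add_zero, hpar, hp_map_eq_map_vp hL]

theorem Aten_map_of_vp_map_eq_map_vp (hn_zero : ∀ X, nabla X 0 = 0)
    (hpar : ∀ X Y, nabla X (L Y) = L (nabla X Y)) (hL : ∀ Z, vp (L Z) = L (vp Z))
    (hX : IsHorizontal vp X) (hY : IsHorizontal vp Y) :
    Aten nabla vp X (L Y) = L (vp (nabla X Y)) := by
  rw [Aten, hp_eq_self_of_isHorizontal hX, hL, hY, map_zero, hn_zero, hp_map_eq_map_hp hL,
    hp_eq_self_of_isHorizontal hY, hpar, hL]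
  simp only [hp, map_zero, sub_zero, zero_add]

theorem horTotallyGeodesic_iff_Aten_map_eq_zero (hL2 : ∀ X, L (L X) = -X)
    (hA : ∀ X Y, IsHorizontal vp X → IsHorizontal vp Y →
      Aten nabla vp X (L Y) = L (vp (nabla X Y))) :
    HorTotallyGeodesic nabla vp ↔ ∀ X Y : M, IsHorizontal vp X → IsHorizontal vp Y →
      Aten nabla vp X (L Y) = 0 := by
  have hL_inj : Function.Injective L :=
    Function.LeftInverse.injective (g := fun X => -L X) fun X => by simp only [hL2, neg_neg]
  exact forall₄_congr fun X Y hX hY => by rw [hA X Y hX hY, map_eq_zero_iff L hL_inj]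

end

theorem hLagrangian_horizontal_totally_geodesic_iff_general
    (nabla : VF → VF → VF)
    (hn_addr : ∀ X Y Z, nabla X (Y + Z) = nabla X Y + nabla X Z)
    (vp : VF →ₗ[Fn] VF)
    (hvp_idem : ∀ X, vp (vp X) = vp X)
    -- a quaternionic Hermitian basis (I, J, K)
    (I J K : VF →ₗ[Fn] VF)
    (hI2 : ∀ X, I (I X) = -X) (hJ2 : ∀ X, J (J X) = -X) (hK2 : ∀ X, K (K X) = -X)
    -- hyperkähler: I, J, K are parallel
    (hIpar : ∀ X Y, nabla X (I Y) = I (nabla X Y))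
    (hJpar : ∀ X Y, nabla X (J Y) = J (nabla X Y))
    (hKpar : ∀ X Y, nabla X (K Y) = K (nabla X Y))
    -- F is h-Lagrangian: I(ker F_*) = (ker F_*)^⊥, J(ker F_*) = ker F_*,
    -- K(ker F_*) = (ker F_*)^⊥
    (hLI : ∀ V, IsVertical vp V → IsHorizontal vp (I V))
    (hLI' : ∀ X, IsHorizontal vp X → IsVertical vp (I X))
    (hLJ : ∀ V, IsVertical vp V → IsVertical vp (J V))
    (hLJ' : ∀ X, IsHorizontal vp X → IsHorizontal vp (J X))
    (hLK : ∀ V, IsVertical vp V → IsHorizontal vp (K V))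
    (hLK' : ∀ X, IsHorizontal vp X → IsVertical vp (K X))
 :
    (HorTotallyGeodesic nabla vp ↔ (∀ X Y : VF, IsHorizontal vp X → IsHorizontal vp Y →
        Aten nabla vp X (I Y) = 0)) ∧
    (HorTotallyGeodesic nabla vp ↔ (∀ X Y : VF, IsHorizontal vp X → IsHorizontal vp Y →
        Aten nabla vp X (K Y) = 0)) ∧
    (HorTotallyGeodesic nabla vp ↔ (∀ X Y : VF, IsHorizontal vp X → IsHorizontal vp Y →
        Aten nabla vp X (J Y) = 0)) := by
  have hn_zero : ∀ X, nabla X 0 = 0 := fun X => (AddMonoidHom.mk' (nabla X) (hn_addr X)).map_zero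
  refine ⟨horTotallyGeodesic_iff_Aten_map_eq_zero hI2 fun X Y hX hY => ?_,
    horTotallyGeodesic_iff_Aten_map_eq_zero hK2 fun X Y hX hY => ?_,
    horTotallyGeodesic_iff_Aten_map_eq_zero hJ2 fun X Y hX hY => ?_⟩
  · exact Aten_map_of_vp_map_eq_map_hp hn_zero hIpar (vp_map_eq_map_hp hvp_idem hLI hLI') hX hY
  · exact Aten_map_of_vp_map_eq_map_hp hn_zero hKpar (vp_map_eq_map_hp hvp_idem hLK hLK') hX hY
  · exact Aten_map_of_vp_map_eq_map_vp hn_zero hJpar (vp_map_eq_map_vp hvp_idem hLJ hLJ') hX hY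

/-- Lemma 3.11: for a h-Lagrangian submersion from a hyperkähler manifold the
following are equivalent: (a) the horizontal distribution defines a totally
geodesic foliation; (b) `A_X IY = 0`; (c) `A_X KY = 0`; (d) `A_X JY = 0`
for all horizontal `X, Y`. -/
theorem hLagrangian_horizontal_totally_geodesic_iff
    (g : VF →ₗ[Fn] VF →ₗ[Fn] Fn)
    (hg_symm : ∀ X Y, g X Y = g Y X)
    (deriv : VF → Fn → Fn)
    (nabla : VF → VF → VF) (bracket : VF → VF → VF)
    (hn_addl : ∀ X Y Z, nabla (X + Y) Z = nabla X Z + nabla Y Z)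
    (hn_smul : ∀ (f : Fn) X Y, nabla (f • X) Y = f • nabla X Y)
    (hn_addr : ∀ X Y Z, nabla X (Y + Z) = nabla X Y + nabla X Z)
    (hn_leib : ∀ X (f : Fn) Y, nabla X (f • Y) = deriv X f • Y + f • nabla X Y)
    (h_compat : ∀ X Y Z, deriv X (g Y Z) = g (nabla X Y) Z + g Y (nabla X Z))
    (h_torsion : ∀ X Y, nabla X Y - nabla Y X = bracket X Y)
    (vp : VF →ₗ[Fn] VF)
    (hvp_idem : ∀ X, vp (vp X) = vp X)
    (hvp_sa : ∀ X Y, g (vp X) Y = g X (vp Y))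
    -- a quaternionic Hermitian basis (I, J, K)
    (I J K : VF →ₗ[Fn] VF)
    (hI2 : ∀ X, I (I X) = -X) (hJ2 : ∀ X, J (J X) = -X) (hK2 : ∀ X, K (K X) = -X)
    (hIiso : ∀ X Y, g (I X) (I Y) = g X Y)
    (hJiso : ∀ X Y, g (J X) (J Y) = g X Y)
    (hKiso : ∀ X Y, g (K X) (K Y) = g X Y)
    (hIJ : ∀ X, I (J X) = K X) (hJI : ∀ X, J (I X) = -K X)
    (hJK : ∀ X, J (K X) = I X) (hKJ : ∀ X, K (J X) = -I X)
    (hKI : ∀ X, K (I X) = J X) (hIK : ∀ X, I (K X) = -J X)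
    -- hyperkähler: I, J, K are parallel
    (hIpar : ∀ X Y, nabla X (I Y) = I (nabla X Y))
    (hJpar : ∀ X Y, nabla X (J Y) = J (nabla X Y))
    (hKpar : ∀ X Y, nabla X (K Y) = K (nabla X Y))
    -- F is h-Lagrangian: I(ker F_*) = (ker F_*)^⊥, J(ker F_*) = ker F_*,
    -- K(ker F_*) = (ker F_*)^⊥
    (hLI : ∀ V, IsVertical vp V → IsHorizontal vp (I V))
    (hLI' : ∀ X, IsHorizontal vp X → IsVertical vp (I X))
    (hLJ : ∀ V, IsVertical vp V → IsVertical vp (J V))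
    (hLJ' : ∀ X, IsHorizontal vp X → IsHorizontal vp (J X))
    (hLK : ∀ V, IsVertical vp V → IsHorizontal vp (K V))
    (hLK' : ∀ X, IsHorizontal vp X → IsVertical vp (K X))
 :
    (HorTotallyGeodesic nabla vp ↔ (∀ X Y : VF, IsHorizontal vp X → IsHorizontal vp Y →
        Aten nabla vp X (I Y) = 0)) ∧
    (HorTotallyGeodesic nabla vp ↔ (∀ X Y : VF, IsHorizontal vp X → IsHorizontal vp Y →
        Aten nabla vp X (K Y) = 0)) ∧
    (HorTotallyGeodesic nabla vp ↔ (∀ X Y : VF, IsHorizontal vp X → IsHorizontal vp Y →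
        Aten nabla vp X (J Y) = 0)) :=
  hLagrangian_horizontal_totally_geodesic_iff_general nabla hn_addr vp hvp_idem I J K hI2 hJ2 hK2
    hIpar hJpar hKpar hLI hLI' hLJ hLJ' hLK hLK'
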